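/- Let P be a right LCM monoid and S the associated semigroup of classes [p,q] together with 0. Then S is an inverse semigroup: every element has a unique generalized inverse, with [p,q]* = [q,p], and idempotents commute. -/

import Mathlib

/-- The principal right ideal `pP` of a monoid. -/
def rI {M : Type*} [Monoid M] (p : M) : Set M := {x | ∃ y, x = p * y}

/-- A right LCM monoid: left cancellative, and any two principal right ideals are
either disjoint or intersect in another principal right ideal. -/
class RightLCM (M : Type*) extends Monoid M where
  mul_left_cancel' : ∀ a b c : M, a * b = a * c → b = c
  lcm : ∀ p q : M, rI p ∩ rI q = ∅ ∨ ∃ r : M, rI p ∩ rI q = rI r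

namespace RightLCM

variable {M : Type*} [RightLCM M]

/-- The equivalence relation `(p,q) ∼ (pu,qu)` for units `u`. -/
def peq (x y : M × M) : Prop := ∃ u : M, IsUnit u ∧ x.1 = y.1 * u ∧ x.2 = y.2 * u

theorem peq_equivalence : Equivalence (peq (M := M)) := by
  constructor
  · intro x; exact ⟨1, isUnit_one, by simp, by simp⟩
  · rintro x y ⟨u, hu, h1, h2⟩
    obtain ⟨w, hw⟩ := hu
    subst hw
    exact ⟨↑w⁻¹, Units.isUnit _, by rw [h1, mul_assoc, w.mul_inv, mul_one],
      by rw [h2, mul_assoc, w.mul_inv, mul_one]⟩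
  · rintro x y z ⟨u, hu, h1, h2⟩ ⟨v, hv, h3, h4⟩
    exact ⟨v * u, hv.mul hu, by rw [h1, h3, mul_assoc], by rw [h2, h4, mul_assoc]⟩

instance pSetoid : Setoid (M × M) := ⟨peq, peq_equivalence⟩

/-- The inverse semigroup `S = {[p,q] : p,q ∈ P} ∪ {0}` associated to a right LCM monoid. -/
abbrev S (M : Type*) [RightLCM M] := WithZero (Quotient (pSetoid (M := M)))

/-- The class `[p,q]` as an element of `S M`. -/
def cls (p q : M) : S M := (Quotient.mk (pSetoid (M := M)) (p, q) : Quotient (pSetoid (M := M)))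

open scoped Classical in
/-- Product of two representatives: `[a,b][c,d] = [ab', dc']` when `bP ∩ cP = rP` with
`bb' = cc' = r`, and `0` when `bP ∩ cP = ∅`. -/
noncomputable def mulPair (x y : M × M) : S M :=
  if h : rI x.2 ∩ rI y.1 = ∅ then 0
  else
    have hr := (RightLCM.lcm x.2 y.1).resolve_left h
    have hmem : Classical.choose hr ∈ rI x.2 ∩ rI y.1 :=
      (Set.ext_iff.mp (Classical.choose_spec hr) _).mpr ⟨1, (mul_one _).symm⟩
    cls (x.1 * Classical.choose hmem.1) (y.2 * Classical.choose hmem.2)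

/-- The multiplication on `S M` (with `0` absorbing). -/
noncomputable def smul : S M → S M → S M
  | none, _ => 0
  | some _, none => 0
  | some a, some b => mulPair a.out b.out

/-- The involution `[p,q]* = [q,p]` on `S M`. -/
noncomputable def star : S M → S M
  | none => 0
  | some a => cls a.out.2 a.out.1

end RightLCM

/-! A product `[a,b][c,d]` may be computed from any common multiple `b b' = c c'` generating
`bP ∩ cP`, since two generators differ by a unit. If `[c,d]` is a generalized inverse of
`[p,q]`, comparing `[p,q][c,d][p,q] = [p,q]` with `[p,q]` up to units gives `c ∣ q` and `d ∣ p`,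
and symmetrically `q ∣ c` and `p ∣ d`; by left cancellation `c = q n` and `d = p k` for units
`n, k`, and then `[p,q][qn,pk][p,q] = [pn,qk]` forces `n = k`. An idempotent `[p,q]` has
`p = q`, and `[p,p][q,q] = [r,r] = [q,q][p,p]` where `rP = pP ∩ qP`. -/

section Divisibility

variable {M : Type*} [Monoid M]

theorem mem_rI {p x : M} : x ∈ rI p ↔ p ∣ x := Iff.rfl

theorem mem_rI_self (p : M) : p ∈ rI p := dvd_rfl

theorem rI_mul_subset (p u : M) : rI (p * u) ⊆ rI p :=
  fun _ h => (dvd_mul_right p u).trans h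

theorem rI_mul_of_isUnit {p u : M} (hu : IsUnit u) : rI (p * u) = rI p :=
  Set.ext fun _ => hu.mul_right_dvd

variable [IsLeftCancelMul M]

theorem associated_of_dvd_dvd_of_isLeftCancelMul {a b : M} (hab : a ∣ b) (hba : b ∣ a) :
    Associated a b := by
  obtain ⟨u, rfl⟩ := hab
  obtain ⟨v, hv⟩ := hba
  have huv : u * v = 1 := mul_left_cancel (a := a) (by rw [← mul_assoc, ← hv, mul_one])
  have hvu : v * u = 1 := mul_left_cancel (a := a * u) (by
    rw [mul_assoc, ← mul_assoc u, huv, one_mul, mul_one])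
  exact ⟨⟨u, v, huv, hvu⟩, rfl⟩

theorem associated_of_rI_eq {a b : M} (h : rI a = rI b) : Associated a b :=
  associated_of_dvd_dvd_of_isLeftCancelMul (mem_rI.mp (h ▸ mem_rI_self b))
    (mem_rI.mp (h.symm ▸ mem_rI_self a))

end Divisibility

namespace RightLCM

variable {M : Type*} [RightLCM M]

instance : IsLeftCancelMul M := ⟨fun a _ _ h => mul_left_cancel' a _ _ h⟩

theorem cls_mul_unit {a b u : M} (hu : IsUnit u) : cls (a * u) (b * u) = cls a b := by
  unfold cls
  exact congrArg _ (Quotient.sound ⟨u, hu, rfl, rfl⟩)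

theorem cls_eq_iff {a b c d : M} :
    cls a b = cls c d ↔ ∃ u : M, IsUnit u ∧ a = c * u ∧ b = d * u :=
  ⟨fun h => Quotient.exact (Option.some_injective _ h),
    fun ⟨_, hu, ha, hb⟩ => ha ▸ hb ▸ cls_mul_unit hu⟩

theorem cls_ne_zero (a b : M) : cls a b ≠ 0 := Option.some_ne_none _

theorem eq_zero_or_exists_eq_cls (s : S M) : s = 0 ∨ ∃ p q : M, s = cls p q := by
  rcases s with _ | ⟨⟨p, q⟩⟩
  · exact Or.inl rfl
  · exact Or.inr ⟨p, q, rfl⟩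

theorem mulPair_eq_zero {x y : M × M} (h : rI x.2 ∩ rI y.1 = ∅) : mulPair x y = 0 := by
  rw [mulPair, dif_pos h]

theorem exists_mulPair_eq {x y : M × M} (h : rI x.2 ∩ rI y.1 ≠ ∅) :
    ∃ r b' c', rI x.2 ∩ rI y.1 = rI r ∧ x.2 * b' = r ∧ y.1 * c' = r ∧
      mulPair x y = cls (x.1 * b') (y.2 * c') := by
  rw [mulPair, dif_neg h]
  generalize_proofs hr hmem
  exact ⟨_, _, _, Classical.choose_spec hr, (Classical.choose_spec (hmem hr).1).symm,
    (Classical.choose_spec (hmem hr).2).symm, rfl⟩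

theorem mulPair_eq {x y : M × M} {r b' c' : M}
    (hr : rI x.2 ∩ rI y.1 = rI r) (hb : x.2 * b' = r) (hc : y.1 * c' = r) :
    mulPair x y = cls (x.1 * b') (y.2 * c') := by
  have hne : rI x.2 ∩ rI y.1 ≠ ∅ :=
    Set.nonempty_iff_ne_empty.mp (hr ▸ ⟨r, mem_rI_self r⟩)
  obtain ⟨r₀, b₀, c₀, hr₀, hb₀, hc₀, hxy⟩ := exists_mulPair_eq hne
  obtain ⟨u, rfl⟩ := associated_of_rI_eq (hr₀.symm.trans hr)
  have hbu : b' = b₀ * u := mul_left_cancel (hb.trans (by rw [← hb₀, mul_assoc]))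
  have hcu : c' = c₀ * u := mul_left_cancel (hc.trans (by rw [← hc₀, mul_assoc]))
  rw [hxy, hbu, hcu, ← mul_assoc, ← mul_assoc, cls_mul_unit u.isUnit]

theorem mulPair_congr {x x' y y' : M × M} (hx : peq x x') (hy : peq y y') :
    mulPair x y = mulPair x' y' := by
  obtain ⟨u, hu, hx1, hx2⟩ := hx
  obtain ⟨v, hv, hy1, hy2⟩ := hy
  have hideal : rI x.2 ∩ rI y.1 = rI x'.2 ∩ rI y'.1 := by
    rw [hx2, hy1, rI_mul_of_isUnit hu, rI_mul_of_isUnit hv]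
  by_cases h : rI x.2 ∩ rI y.1 = ∅
  · rw [mulPair_eq_zero h, mulPair_eq_zero (hideal ▸ h)]
  obtain ⟨r, b, c, hr, hb, hc, hxy⟩ := exists_mulPair_eq h
  have hub : x'.2 * (u * b) = r := by rw [← mul_assoc, ← hx2, hb]
  have hvc : y'.1 * (v * c) = r := by rw [← mul_assoc, ← hy1, hc]
  rw [hxy, mulPair_eq (hideal ▸ hr) hub hvc, ← mul_assoc, ← mul_assoc, ← hx1, ← hy2]

theorem smul_cls (a b c d : M) : smul (cls a b) (cls c d) = mulPair (a, b) (c, d) :=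
  mulPair_congr (Quotient.mk_out (s := pSetoid) _) (Quotient.mk_out (s := pSetoid) _)

theorem smul_zero_left (s : S M) : smul 0 s = 0 := rfl

theorem smul_zero_right (s : S M) : smul s 0 = 0 := by
  rcases s with _ | _ <;> rfl

theorem smul_cls_eq_zero_or_exists (a b c d : M) :
    smul (cls a b) (cls c d) = 0 ∨
      ∃ b' c', b * b' = c * c' ∧ smul (cls a b) (cls c d) = cls (a * b') (d * c') := by
  rw [smul_cls]
  by_cases h : rI b ∩ rI c = ∅
  · exact Or.inl (mulPair_eq_zero h)
  obtain ⟨r, b', c', -, hb, hc, hmul⟩ := exists_mulPair_eq (x := (a, b)) (y := (c, d)) h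
  exact Or.inr ⟨b', c', hb.trans hc.symm, hmul⟩

theorem smul_cls_mul_right (a b u d : M) : smul (cls a b) (cls (b * u) d) = cls (a * u) d := by
  rw [smul_cls, mulPair_eq (Set.inter_eq_right.mpr (rI_mul_subset b u)) rfl (mul_one _), mul_one]

theorem smul_cls_mul_left (a c u d : M) : smul (cls a (c * u)) (cls c d) = cls a (d * u) := by
  rw [smul_cls, mulPair_eq (Set.inter_eq_left.mpr (rI_mul_subset c u)) (mul_one _) rfl, mul_one]

theorem smul_cls_cls (p q r : M) : smul (cls p q) (cls q r) = cls p r := by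
  simpa using smul_cls_mul_right p q 1 r

theorem dvd_of_smul_smul_cls_eq_self {p q c d : M}
    (h : smul (smul (cls p q) (cls c d)) (cls p q) = cls p q) : c ∣ q ∧ d ∣ p := by
  rcases smul_cls_eq_zero_or_exists p q c d with h0 | ⟨b', c', hbc, hst⟩
  · rw [h0, smul_zero_left] at h
    exact absurd h.symm (cls_ne_zero p q)
  rw [hst] at h
  rcases smul_cls_eq_zero_or_exists (p * b') (d * c') p q with h0 | ⟨e, f, hef, hsts⟩
  · rw [h0] at h
    exact absurd h.symm (cls_ne_zero p q)
  obtain ⟨u, hu, hpu, hqu⟩ := cls_eq_iff.mp (hsts ▸ h)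
  have hbe : b' * e = u := mul_left_cancel (by rw [← mul_assoc, hpu])
  have hfu : f = u := mul_left_cancel hqu
  constructor
  · rw [← hu.dvd_mul_right, ← hbe, ← mul_assoc, hbc, mul_assoc]
    exact dvd_mul_right _ _
  · rw [← hu.dvd_mul_right, ← hfu, ← hef, mul_assoc]
    exact dvd_mul_right _ _

def IsGenInverse (s t : S M) : Prop := smul (smul s t) s = s ∧ smul (smul t s) t = t

theorem isGenInverse_cls_swap (p q : M) : IsGenInverse (cls p q) (cls q p) := by
  simp only [IsGenInverse, smul_cls_cls, and_self]

theorem eq_cls_swap_of_isGenInverse {p q c d : M} (h : IsGenInverse (cls p q) (cls c d)) :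
    cls c d = cls q p := by
  obtain ⟨h₁, h₂⟩ := h
  obtain ⟨hcq, hdp⟩ := dvd_of_smul_smul_cls_eq_self h₁
  obtain ⟨hpd, hqc⟩ := dvd_of_smul_smul_cls_eq_self h₂
  obtain ⟨n, rfl⟩ := associated_of_dvd_dvd_of_isLeftCancelMul hqc hcq
  obtain ⟨k, rfl⟩ := associated_of_dvd_dvd_of_isLeftCancelMul hpd hdp
  rw [smul_cls_mul_right, smul_cls_mul_left, cls_eq_iff] at h₁
  obtain ⟨u, -, hpn, hqk⟩ := h₁
  have hnk : (n : M) = k := (mul_left_cancel hpn).trans (mul_left_cancel hqk).symm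
  rw [hnk, cls_mul_unit k.isUnit]

theorem existsUnique_isGenInverse (s : S M) : ∃! t, IsGenInverse s t := by
  rcases eq_zero_or_exists_eq_cls s with rfl | ⟨p, q, rfl⟩
  · refine ⟨0, ⟨rfl, rfl⟩, fun t ⟨_, ht⟩ => ?_⟩
    rwa [smul_zero_right, smul_zero_left, eq_comm] at ht
  refine ⟨cls q p, isGenInverse_cls_swap p q, fun t ht => ?_⟩
  rcases eq_zero_or_exists_eq_cls t with rfl | ⟨c, d, rfl⟩
  · have h₁ := ht.1
    rw [smul_zero_right, smul_zero_left] at h₁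
    exact absurd h₁.symm (cls_ne_zero p q)
  exact eq_cls_swap_of_isGenInverse ht

theorem eq_of_smul_cls_self_eq {p q : M} (h : smul (cls p q) (cls p q) = cls p q) : q = p := by
  rcases smul_cls_eq_zero_or_exists p q p q with h0 | ⟨b', c', hbc, hsq⟩
  · exact absurd (h0 ▸ h).symm (cls_ne_zero p q)
  obtain ⟨u, hu, hpu, hqu⟩ := cls_eq_iff.mp (hsq ▸ h)
  rw [mul_left_cancel hpu, mul_left_cancel hqu] at hbc
  exact hu.mul_left_inj.mp hbc

theorem smul_cls_self_comm (p q : M) :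
    smul (cls p p) (cls q q) = smul (cls q q) (cls p p) := by
  rw [smul_cls, smul_cls]
  by_cases h : rI p ∩ rI q = ∅
  · rw [mulPair_eq_zero h, mulPair_eq_zero (Set.inter_comm (rI p) _ ▸ h)]
  obtain ⟨r, p', q', hr, hp, hq, hpq⟩ := exists_mulPair_eq (x := (p, p)) (y := (q, q)) h
  rw [hpq, mulPair_eq (Set.inter_comm (rI p) _ ▸ hr) hq hp]
  exact congrArg₂ cls (hp.trans hq.symm) (hq.trans hp.symm)

theorem smul_comm_of_smul_self_eq {e f : S M} (he : smul e e = e) (hf : smul f f = f) :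
    smul e f = smul f e := by
  rcases eq_zero_or_exists_eq_cls e with rfl | ⟨p, q, rfl⟩
  · exact (smul_zero_right f).symm
  rcases eq_zero_or_exists_eq_cls f with rfl | ⟨p', q', rfl⟩
  · exact smul_zero_right _
  rw [eq_of_smul_cls_self_eq he, eq_of_smul_cls_self_eq hf]
  exact smul_cls_self_comm p p'

end RightLCM

open RightLCM in
/-- `S` is an inverse semigroup: every element has a unique generalized inverse,
the inverse of `[p,q]` is `[q,p]`, and idempotents commute. -/
theorem stmt5 {M : Type*} [RightLCM M] :
    (∀ s : S M, ∃! t : S M, smul (smul s t) s = s ∧ smul (smul t s) t = t) ∧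
    (∀ p q : M, smul (smul (cls p q) (cls q p)) (cls p q) = cls p q ∧
      smul (smul (cls q p) (cls p q)) (cls q p) = cls q p) ∧
    (∀ e f : S M, smul e e = e → smul f f = f → smul e f = smul f e) :=
  ⟨existsUnique_isGenInverse, isGenInverse_cls_swap, fun _ _ => smul_comm_of_smul_self_eq⟩
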